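/- arXiv:2502.16997 — 2 statements merged into one kernel-verified Lean document; each statement's English description precedes it below -/
import Mathlib

section
/- For every integral connectivity structure 𝒦 on a finite nonempty set I, 𝒦 equals the set of those subsets A ⊆ I such that every dissociation of A is contested by some irreducible connected set K ∈ 𝒦̃. -/
universe u

variable {I : Type u}

/-- `{J₁, J₂}` is a dissociation of `J ⊆ I`: an (unordered) pair of nonempty
disjoint subsets whose union is `J`. -/
def IsDissociation (J J1 J2 : Set I) : Prop :=
  J1.Nonempty ∧ J2.Nonempty ∧ Disjoint J1 J2 ∧ J1 ∪ J2 = J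

/-- `A` contests the dissociation `{J₁, J₂}`. -/
def Contests (A J1 J2 : Set I) : Prop :=
  A ⊆ J1 ∪ J2 ∧ (A ∩ J1).Nonempty ∧ (A ∩ J2).Nonempty

/-- An integral connectivity structure on `I`. -/
def IsConnectivity (𝒦 : Set (Set I)) : Prop :=
  ∅ ∈ 𝒦 ∧ (∀ i : I, ({i} : Set I) ∈ 𝒦) ∧
    ∀ K L : Set I, K ∈ 𝒦 → L ∈ 𝒦 → (K ∩ L).Nonempty → K ∪ L ∈ 𝒦

/-- The integral connectivity structure generated by `𝒜`. -/
def generated (𝒜 : Set (Set I)) : Set (Set I) :=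
  ⋂₀ {𝒦 : Set (Set I) | IsConnectivity 𝒦 ∧ 𝒜 ⊆ 𝒦}

/-- The set `𝒦̃` of irreducible members of `𝒦` with at least two elements. -/
def irred (𝒦 : Set (Set I)) : Set (Set I) :=
  {K | K ∈ 𝒦 ∧ K ∉ generated (𝒦 \ {K}) ∧ 2 ≤ K.ncard}

/-- The sum of two integral connectivity structures: `𝒦₁ ⊕ 𝒦₂ = [𝒦₁ ∪ 𝒦₂]`. -/
def csum (𝒦₁ 𝒦₂ : Set (Set I)) : Set (Set I) := generated (𝒦₁ ∪ 𝒦₂)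

/-- The discrete integral connectivity structure on `I`. -/
def discreteStructure (I : Type u) : Set (Set I) :=
  {(∅ : Set I)} ∪ {A : Set I | ∃ i : I, A = {i}}

/-- `C` is a connected component of `(I, 𝒦)`: a maximal member of `𝒦`. -/
def IsComponent (𝒦 : Set (Set I)) (C : Set I) : Prop :=
  C ∈ 𝒦 ∧ ∀ K ∈ 𝒦, C ⊆ K → K = C

/-- `Γ_𝒜`: subsets of `I` all of whose dissociations are contested by a member of `𝒜`. -/
def Gamma (𝒜 : Set (Set I)) : Set (Set I) :=
  {B | ∀ J1 J2 : Set I, IsDissociation B J1 J2 → ∃ A ∈ 𝒜, Contests A J1 J2}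

/-- A random family on `I`: a finite probability space together with finitely
valued random variables indexed by `I`. -/
structure RandomFamily (I : Type u) where
  Ω : Type
  [fintΩ : Fintype Ω]
  P : Ω → ℝ
  P_nonneg : ∀ ω, 0 ≤ P ω
  P_total : ∑ ω, P ω = 1
  R : I → Type
  [fintR : ∀ i, Fintype (R i)]
  X : ∀ i, Ω → R i

attribute [instance] RandomFamily.fintΩ RandomFamily.fintR

/-- Probability of an event. -/
noncomputable def RandomFamily.prob (φ : RandomFamily I) (E : Set φ.Ω) : ℝ :=
  ∑ ω, E.indicator φ.P ω

/-- `P(X_J = x_J)`. -/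
noncomputable def RandomFamily.probEq (φ : RandomFamily I) (J : Set I)
    (x : ∀ i, φ.R i) : ℝ :=
  φ.prob {ω | ∀ j ∈ J, φ.X j ω = x j}

/-- `φ` respects the dissociation `{J₁, J₂}`:
`P(X_{J₁∪J₂} = x) = P(X_{J₁} = x) · P(X_{J₂} = x)` for all tuples of values. -/
def RandomFamily.Respects (φ : RandomFamily I) (J1 J2 : Set I) : Prop :=
  ∀ x : ∀ i, φ.R i, φ.probEq (J1 ∪ J2) x = φ.probEq J1 x * φ.probEq J2 x

/-- The connectivity structure `K_φ` of a random family: the subsets `J ⊆ I`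
such that `φ` contests every dissociation of `J`. -/
def RandomFamily.Kconn (φ : RandomFamily I) : Set (Set I) :=
  {J | ∀ J1 J2 : Set I, IsDissociation J J1 J2 → ¬ φ.Respects J1 J2}

/-- Tensor product of two random families. -/
noncomputable def RandomFamily.tensor (φ ψ : RandomFamily I) : RandomFamily I where
  Ω := φ.Ω × ψ.Ω
  fintΩ := inferInstance
  P := fun p => φ.P p.1 * ψ.P p.2
  P_nonneg := fun p => mul_nonneg (φ.P_nonneg _) (ψ.P_nonneg _)
  P_total := by
    rw [Fintype.sum_prod_type]
    simp only [← Finset.mul_sum]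
    rw [ψ.P_total]
    simp only [mul_one]
    exact φ.P_total
  R := fun i => φ.R i × ψ.R i
  fintR := fun i => inferInstance
  X := fun i p => (φ.X i p.1, ψ.X i p.2)

/-- Restriction of a random family to a subset `J ⊆ I`. -/
def RandomFamily.restrict (φ : RandomFamily I) (J : Set I) : RandomFamily J where
  Ω := φ.Ω
  fintΩ := inferInstance
  P := φ.P
  P_nonneg := φ.P_nonneg
  P_total := φ.P_total
  R := fun j => φ.R (j : I)
  fintR := fun j => inferInstance
  X := fun j => φ.X (j : I)

/-- The canonical `M`-brunnian family on `I`, for `M` of cardinality `m`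
(with elements listed in increasing order). -/
noncomputable def brunnian [LinearOrder I] (M : Finset I) (m : ℕ) (h : M.card = m) :
    RandomFamily I where
  Ω := Fin (m - 1) → ZMod 2
  fintΩ := inferInstance
  P := fun _ => ((2 : ℝ) ^ (m - 1))⁻¹
  P_nonneg := fun _ => by positivity
  P_total := by
    have hcard : Fintype.card (Fin (m - 1) → ZMod 2) = 2 ^ (m - 1) := by
      rw [Fintype.card_fun]
      simp
    rw [Finset.sum_const, Finset.card_univ, hcard, nsmul_eq_mul]
    push_cast
    exact mul_inv_cancel₀ (by positivity)
  R := fun _ => ZMod 2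
  fintR := fun _ => inferInstance
  X := fun i ω =>
    if hi : i ∈ M then
      if hk : (((M.orderIsoOfFin h).symm ⟨i, hi⟩ : Fin m) : ℕ) < m - 1 then
        ω ⟨_, hk⟩
      else ∑ j, ω j
    else 0

/-!
If `K` and `L` share a point `z`, a dissociation of `K ∪ L` puts `z` on one side and some point of
`K ∪ L` on the other, so `K` or `L` contests it. Hence `Γ_𝒜` is an integral connectivity structure containing
`𝒜`, and `[𝒜] ⊆ Γ_𝒜`.

If `A ∈ 𝒦` is reducible, then `A ∈ [𝒦 \ {A}] ⊆ Γ_{𝒦 \ {A}}`, so every dissociation of `A` is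
contested by a proper subset `B ∈ 𝒦`, and by induction on `B` also by a member of `𝒦̃`.
Conversely, let `A ∈ Γ_𝒜` with `𝒜 ⊆ 𝒦`, and let `K` be maximal among the members of `𝒦` with
`a ∈ K ⊆ A`. If `K ≠ A`, a member of `𝒜` contesting `{K, A \ K}` meets `K`, so its union with `K`
is a larger such member; hence `K = A ∈ 𝒦`.
-/

section

variable {𝒜 𝒦 : Set (Set I)} {A B K L J1 J2 : Set I}

lemma IsDissociation.contests (h : IsDissociation A J1 J2) : Contests A J1 J2 := by
  obtain ⟨⟨x, hx⟩, ⟨y, hy⟩, -, rfl⟩ := h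
  exact ⟨subset_rfl, ⟨x, Or.inl hx, hx⟩, ⟨y, Or.inr hy, hy⟩⟩

lemma IsDissociation.one_lt_ncard (h : IsDissociation A J1 J2) (hA : A.Finite) :
    1 < A.ncard := by
  obtain ⟨⟨x, hx⟩, ⟨y, hy⟩, hd, rfl⟩ := h
  exact (Set.one_lt_ncard_iff hA).2 ⟨x, y, Or.inl hx, Or.inr hy, hd.ne_of_mem hx hy⟩

lemma Contests.isDissociation_inter (h : Contests B J1 J2) (hd : Disjoint J1 J2) :
    IsDissociation B (B ∩ J1) (B ∩ J2) :=
  ⟨h.2.1, h.2.2, hd.mono Set.inter_subset_right Set.inter_subset_right,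
    by rw [← Set.inter_union_distrib_left, Set.inter_eq_left.2 h.1]⟩

lemma Contests.of_inter (h : Contests A (B ∩ J1) (B ∩ J2)) : Contests A J1 J2 :=
  ⟨h.1.trans (Set.union_subset_union Set.inter_subset_right Set.inter_subset_right),
    h.2.1.mono (Set.inter_subset_inter_right _ Set.inter_subset_right),
    h.2.2.mono (Set.inter_subset_inter_right _ Set.inter_subset_right)⟩

lemma IsDissociation.contests_or_contests_of_mem (h : IsDissociation (K ∪ L) J1 J2) {z : I}
    (hz : z ∈ K ∩ L) : Contests K J1 J2 ∨ Contests L J1 J2 := by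
  obtain ⟨⟨x, hx⟩, ⟨y, hy⟩, -, hu⟩ := h
  have hK : K ⊆ J1 ∪ J2 := hu ▸ Set.subset_union_left
  have hL : L ⊆ J1 ∪ J2 := hu ▸ Set.subset_union_right
  have hxKL : x ∈ K ∪ L := hu ▸ Or.inl hx
  have hyKL : y ∈ K ∪ L := hu ▸ Or.inr hy
  rcases hK hz.1 with hz1 | hz2
  · rcases hyKL with hyK | hyL
    · exact Or.inl ⟨hK, ⟨z, hz.1, hz1⟩, ⟨y, hyK, hy⟩⟩
    · exact Or.inr ⟨hL, ⟨z, hz.2, hz1⟩, ⟨y, hyL, hy⟩⟩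
  · rcases hxKL with hxK | hxL
    · exact Or.inl ⟨hK, ⟨x, hxK, hx⟩, ⟨z, hz.1, hz2⟩⟩
    · exact Or.inr ⟨hL, ⟨x, hxL, hx⟩, ⟨z, hz.2, hz2⟩⟩

lemma exists_contests_of_mem_gamma (hB : B ∈ Gamma 𝒜) (h : Contests B J1 J2)
    (hd : Disjoint J1 J2) : ∃ A ∈ 𝒜, Contests A J1 J2 :=
  let ⟨A, hA, hAc⟩ := hB _ _ (h.isDissociation_inter hd)
  ⟨A, hA, hAc.of_inter⟩

lemma subset_gamma (𝒜 : Set (Set I)) : 𝒜 ⊆ Gamma 𝒜 :=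
  fun A hA _ _ h => ⟨A, hA, h.contests⟩

lemma isConnectivity_gamma (𝒜 : Set (Set I)) : IsConnectivity (Gamma 𝒜) := by
  refine ⟨fun J1 J2 h => ?_, fun i J1 J2 h => ?_, fun K L hK hL ⟨_, hz⟩ J1 J2 h => ?_⟩
  · simpa using h.one_lt_ncard Set.finite_empty
  · simpa using h.one_lt_ncard (Set.finite_singleton i)
  · rcases h.contests_or_contests_of_mem hz with hKc | hLc
    · exact exists_contests_of_mem_gamma hK hKc h.2.2.1
    · exact exists_contests_of_mem_gamma hL hLc h.2.2.1

lemma generated_subset_gamma (𝒜 : Set (Set I)) : generated 𝒜 ⊆ Gamma 𝒜 :=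
  fun _ hB => hB _ ⟨isConnectivity_gamma 𝒜, subset_gamma 𝒜⟩

lemma mem_gamma_irred_of_mem [Finite I] (hA : A ∈ 𝒦) : A ∈ Gamma (irred 𝒦) := by
  induction A using WellFoundedLT.induction with
  | _ A ih =>
    intro J1 J2 h
    by_cases hirr : A ∈ irred 𝒦
    · exact ⟨A, hirr, h.contests⟩
    have hgen : A ∈ generated (𝒦 \ {A}) := by
      by_contra hgen
      exact hirr ⟨hA, hgen, h.one_lt_ncard A.toFinite⟩
    obtain ⟨B, ⟨hB, hBA⟩, hBc⟩ := generated_subset_gamma _ hgen J1 J2 h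
    have hBA : B ⊂ A := (hBc.1.trans h.2.2.2.le).ssubset_of_ne hBA
    exact exists_contests_of_mem_gamma (ih B hBA hB) hBc h.2.2.1

lemma mem_of_mem_gamma (h𝒦 : IsConnectivity 𝒦) (h𝒜 : 𝒜 ⊆ 𝒦) (hA : A ∈ Gamma 𝒜)
    (hfin : A.Finite) : A ∈ 𝒦 := by
  rcases A.eq_empty_or_nonempty with rfl | ⟨a, ha⟩
  · exact h𝒦.1
  obtain ⟨K, ⟨hK, haK, hKA⟩, hmax⟩ := Set.Finite.exists_maximalFor id
    {K | K ∈ 𝒦 ∧ a ∈ K ∧ K ⊆ A} (hfin.finite_subsets.subset fun K hK => hK.2.2)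
    ⟨{a}, h𝒦.2.1 a, rfl, Set.singleton_subset_iff.2 ha⟩
  by_contra hA𝒦
  have hKA' : K ⊂ A := hKA.ssubset_of_ne (by rintro rfl; exact hA𝒦 hK)
  obtain ⟨L, hL, hLs, ⟨w, hwL, hwK⟩, ⟨y, hyL, hyA, hyK⟩⟩ := hA K (A \ K)
    ⟨⟨a, haK⟩, Set.sdiff_nonempty.2 hKA'.not_subset, Set.disjoint_sdiff_right,
      Set.union_sdiff_cancel hKA⟩
  have hKL : K ∪ L ∈ 𝒦 := h𝒦.2.2 K L hK (h𝒜 hL) ⟨w, hwK, hwL⟩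
  have hLA : L ⊆ A := hLs.trans (Set.union_sdiff_cancel hKA).subset
  exact hyK (hmax ⟨hKL, Or.inl haK, Set.union_subset hKA hLA⟩ Set.subset_union_left
    (Or.inr hyL))

end

theorem stmt5_general {I : Type u} [Fintype I] (𝒦 : Set (Set I))
    (h𝒦 : IsConnectivity 𝒦) :
    𝒦 = {A : Set I | ∀ J1 J2 : Set I, IsDissociation A J1 J2 →
          ∃ K ∈ irred 𝒦, Contests K J1 J2} := by
  ext A
  exact ⟨mem_gamma_irred_of_mem,
    fun hA => mem_of_mem_gamma h𝒦 (fun _ hK => hK.1) hA A.toFinite⟩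

/-- an integral connectivity structure `𝒦` equals the set of subsets `A`
such that every dissociation of `A` is contested by some irreducible connected set
`K ∈ 𝒦̃`. -/
theorem stmt5 {I : Type u} [Fintype I] [Nonempty I] (𝒦 : Set (Set I))
    (h𝒦 : IsConnectivity 𝒦) :
    𝒦 = {A : Set I | ∀ J1 J2 : Set I, IsDissociation A J1 J2 →
          ∃ K ∈ irred 𝒦, Contests K J1 J2} :=
  stmt5_general 𝒦 h𝒦
end

section
/- For every pair (φ, ψ) of random families on a finite nonempty set I, the connectivity structure of their tensor product is the sum of their connectivity structures: K_{φ⊗ψ} = K_φ ⊕ K_ψ = [K_φ ∪ K_ψ]. -/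
universe u

variable {I : Type u}

/-!
Marginalising a product law gives the product of the marginals, so a random family respecting
`{J₁, J₂}` respects `{A, B}` for all `A ⊆ J₁`, `B ⊆ J₂`; and summing out one factor shows that
`φ ⊗ ψ` respects a dissociation iff both `φ` and `ψ` do. Hence `K_φ ∪ K_ψ ⊆ K_{φ⊗ψ}`, and
`K_{φ⊗ψ}` is a connectivity structure.

Conversely, a dissociation not respected by `φ` is contested by a member of `K_φ`, so every
dissociation of a member of `K_{φ⊗ψ}` is contested by a member of `K_φ ∪ K_ψ`. A set with this
property lies in `[K_φ ∪ K_ψ]`: a maximal member of `[K_φ ∪ K_ψ]` inside it through a fixed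
point can otherwise be enlarged.
-/

open Finset

open Classical in
noncomputable def agreeOff [Fintype I] {R : I → Type*} [∀ i, Fintype (R i)] (D : Set I)
    (x : ∀ i, R i) : Finset (∀ i, R i) :=
  univ.filter fun y => ∀ i ∉ D, y i = x i

@[simp]
lemma mem_agreeOff [Fintype I] {R : I → Type*} [∀ i, Fintype (R i)] {D : Set I}
    {x y : ∀ i, R i} : y ∈ agreeOff D x ↔ ∀ i ∉ D, y i = x i := by
  simp [agreeOff]

lemma eq_of_forall_mul_eq_mul {ι : Type*} {T : Finset ι} {a a' : ℝ} {b b' : ι → ℝ}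
    (h : ∀ y ∈ T, a * b y = a' * b' y) (hb : ∑ y ∈ T, b y = 1) (hb' : ∑ y ∈ T, b' y = 1) :
    a = a' := by
  calc a = ∑ y ∈ T, a * b y := by rw [← mul_sum, hb, mul_one]
    _ = ∑ y ∈ T, a' * b' y := sum_congr rfl h
    _ = a' := by rw [← mul_sum, hb', mul_one]

lemma IsDissociation.symm {J J1 J2 : Set I} (h : IsDissociation J J1 J2) :
    IsDissociation J J2 J1 :=
  ⟨h.2.1, h.1, h.2.2.1.symm, Set.union_comm J1 J2 ▸ h.2.2.2⟩

lemma IsDissociation.ssubset_left {J J1 J2 : Set I} (h : IsDissociation J J1 J2) : J1 ⊂ J := by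
  obtain ⟨-, ⟨b, hb⟩, hd, rfl⟩ := h
  exact Set.ssubset_iff_of_subset Set.subset_union_left |>.mpr
    ⟨b, Set.mem_union_right _ hb, Set.disjoint_right.mp hd hb⟩

lemma Contests.mono {A C1 C2 J1 J2 : Set I} (h : Contests A C1 C2) (h1 : C1 ⊆ J1)
    (h2 : C2 ⊆ J2) : Contests A J1 J2 :=
  ⟨h.1.trans (Set.union_subset_union h1 h2), h.2.1.mono (Set.inter_subset_inter_right _ h1),
    h.2.2.mono (Set.inter_subset_inter_right _ h2)⟩

lemma isConnectivity_generated (𝒜 : Set (Set I)) : IsConnectivity (generated 𝒜) :=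
  ⟨Set.mem_sInter.mpr fun _ h𝒦 => h𝒦.1.1, fun i => Set.mem_sInter.mpr fun _ h𝒦 => h𝒦.1.2.1 i,
    fun K L hK hL hKL => Set.mem_sInter.mpr fun 𝒦 h𝒦 =>
      h𝒦.1.2.2 K L (Set.mem_sInter.mp hK 𝒦 h𝒦) (Set.mem_sInter.mp hL 𝒦 h𝒦) hKL⟩

lemma subset_generated (𝒜 : Set (Set I)) : 𝒜 ⊆ generated 𝒜 :=
  fun _ hA => Set.mem_sInter.mpr fun _ h𝒦 => h𝒦.2 hA

lemma generated_subset {𝒜 𝒦 : Set (Set I)} (h𝒦 : IsConnectivity 𝒦) (h : 𝒜 ⊆ 𝒦) :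
    generated 𝒜 ⊆ 𝒦 :=
  fun _ hJ => Set.mem_sInter.mp hJ 𝒦 ⟨h𝒦, h⟩

/-- A maximal member `C` of `[𝒜]` with `j ∈ C ⊆ J` is `J`: otherwise a member of `𝒜` contesting
`{C, J \ C}` enlarges it. -/
lemma Gamma_subset_generated [Finite I] (𝒜 : Set (Set I)) : Gamma 𝒜 ⊆ generated 𝒜 := by
  intro J hJ
  have hG := isConnectivity_generated 𝒜
  obtain rfl | ⟨j, hj⟩ := J.eq_empty_or_nonempty
  · exact hG.1
  obtain ⟨C, ⟨hCG, hCJ, hjC⟩, hCmax⟩ := Set.Finite.exists_maximal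
    (s := {C | C ∈ generated 𝒜 ∧ C ⊆ J ∧ j ∈ C}) (Set.toFinite _)
    ⟨{j}, hG.2.1 j, Set.singleton_subset_iff.mpr hj, rfl⟩
  suffices hC : C = J from hC ▸ hCG
  by_contra hne
  have hU : C ∪ (J \ C) = J := Set.union_sdiff_cancel hCJ
  obtain ⟨A, hA, hAJ, ⟨a, haA, haC⟩, ⟨b, hbA, hbC⟩⟩ := hJ C (J \ C)
    ⟨⟨j, hjC⟩, Set.sdiff_nonempty.mpr fun h => hne (hCJ.antisymm h), Set.disjoint_sdiff_right, hU⟩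
  have hCA : C ∪ A ∈ generated 𝒜 := hG.2.2 C A hCG (subset_generated 𝒜 hA) ⟨a, haC, haA⟩
  have := hCmax ⟨hCA, Set.union_subset hCJ (hU ▸ hAJ), Set.mem_union_left _ hjC⟩
    Set.subset_union_left
  exact hbC.2 (this (Set.mem_union_right _ hbA))

namespace RandomFamily

variable (φ ψ : RandomFamily I)

lemma nonempty_Ω : Nonempty φ.Ω := by
  by_contra h
  simpa [not_nonempty_iff.mp h] using φ.P_total

lemma prob_tensor_prod (E : Set φ.Ω) (F : Set ψ.Ω) :
    (φ.tensor ψ).prob (E ×ˢ F) = φ.prob E * ψ.prob F := by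
  classical
  have hP (p : φ.Ω × ψ.Ω) : (E ×ˢ F).indicator (fun q => φ.P q.1 * ψ.P q.2) p =
      E.indicator φ.P p.1 * F.indicator ψ.P p.2 := by
    simp only [Set.indicator_apply, Set.mem_prod, ite_zero_mul_ite_zero]
  calc (φ.tensor ψ).prob (E ×ˢ F)
      = ∑ p : φ.Ω × ψ.Ω, E.indicator φ.P p.1 * F.indicator ψ.P p.2 := sum_congr rfl fun p _ => hP p
    _ = φ.prob E * ψ.prob F := by rw [Fintype.sum_prod_type, prob, prob, sum_mul_sum]

lemma probEq_tensor (S : Set I) (x : ∀ i, φ.R i) (y : ∀ i, ψ.R i) :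
    (φ.tensor ψ).probEq S (fun i => (x i, y i)) = φ.probEq S x * ψ.probEq S y := by
  refine (congrArg (φ.tensor ψ).prob ?_).trans (prob_tensor_prod φ ψ _ _)
  ext ⟨a, b⟩
  change (∀ j ∈ S, (φ.X j a, ψ.X j b) = (x j, y j)) ↔
    (∀ j ∈ S, φ.X j a = x j) ∧ (∀ j ∈ S, ψ.X j b = y j)
  simp only [Prod.mk.injEq, forall_and]

open Classical in
/-- Two independent copies of `φ`, coordinates in `J` read from the first. By `probEq_couple`,
`φ` respects `{J₁, J₂}` iff `φ` and `φ.couple J₁` have the same law on `J₁ ∪ J₂`, so marginals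
of that law are products. -/
noncomputable def couple (J : Set I) : RandomFamily I :=
  { φ.tensor φ with
    R := φ.R
    fintR := φ.fintR
    X := fun i p => if i ∈ J then φ.X i p.1 else φ.X i p.2 }

lemma probEq_couple {J U V : Set I} (hU : U ⊆ J) (hV : Disjoint V J) (x : ∀ i, φ.R i) :
    (φ.couple J).probEq (U ∪ V) x = φ.probEq U x * φ.probEq V x := by
  refine (congrArg (φ.tensor φ).prob ?_).trans (prob_tensor_prod φ φ _ _)
  ext ⟨a, b⟩
  simp only [couple, Set.mem_union, or_imp, forall_and]
  refine and_congr (forall₂_congr fun j hj => ?_) (forall₂_congr fun j hj => ?_)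
  · rw [if_pos (hU hj)]
  · rw [if_neg (hV.notMem_of_mem_left hj)]

lemma probEq_empty (x : ∀ i, φ.R i) : φ.probEq ∅ x = 1 := by
  simp [probEq, prob, φ.P_total]

lemma respects_empty_left (S : Set I) : φ.Respects ∅ S := fun x => by
  rw [Set.empty_union, probEq_empty, one_mul]

variable {φ} in
lemma Respects.symm {J1 J2 : Set I} (h : φ.Respects J1 J2) : φ.Respects J2 J1 := fun x => by
  rw [Set.union_comm, mul_comm]
  exact h x

lemma respects_tensor_iff_forall {J1 J2 : Set I} : (φ.tensor ψ).Respects J1 J2 ↔ ∀ x y,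
    φ.probEq (J1 ∪ J2) x * ψ.probEq (J1 ∪ J2) y =
      φ.probEq J1 x * φ.probEq J2 x * (ψ.probEq J1 y * ψ.probEq J2 y) := by
  refine ⟨fun h x y => ?_, fun h z => ?_⟩
  · have hxy := h fun i => (x i, y i)
    rw [probEq_tensor, probEq_tensor, probEq_tensor] at hxy
    rw [hxy]
    ring
  · change (φ.tensor ψ).probEq _ (fun i => ((z i).1, (z i).2)) =
      (φ.tensor ψ).probEq _ (fun i => ((z i).1, (z i).2)) *
        (φ.tensor ψ).probEq _ (fun i => ((z i).1, (z i).2))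
    rw [probEq_tensor, probEq_tensor, probEq_tensor, h]
    ring

variable [Fintype I]

/-- Each outcome `ω` with `X_A ω = x_A` is counted once, by the tuple equal to `X ω` on `S \ A`
and to `x` elsewhere. -/
lemma sum_probEq_agreeOff {A S : Set I} (hA : A ⊆ S) (x : ∀ i, φ.R i) :
    ∑ y ∈ agreeOff (S \ A) x, φ.probEq S y = φ.probEq A x := by
  classical
  simp only [probEq, prob]
  rw [sum_comm]
  refine sum_congr rfl fun ω _ => ?_
  simp only [Set.indicator_apply, Set.mem_ofPred_eq]
  by_cases hω : ∀ j ∈ A, φ.X j ω = x j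
  · rw [if_pos hω, sum_eq_single_of_mem (fun i => if i ∈ S \ A then φ.X i ω else x i)]
    · refine if_pos fun j hj => ?_
      beta_reduce
      by_cases hjA : j ∈ A
      · rw [if_neg fun h => h.2 hjA, hω j hjA]
      · rw [if_pos ⟨hj, hjA⟩]
    · exact mem_agreeOff.mpr fun i hi => if_neg hi
    · intro y hy hne
      refine if_neg fun h => hne (funext fun i => ?_)
      by_cases hi : i ∈ S \ A
      · rw [if_pos hi]
        exact (h i hi.1).symm
      · rw [if_neg hi, mem_agreeOff.mp hy i hi]
  · rw [if_neg hω]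
    refine sum_eq_zero fun y hy => if_neg fun h => hω fun j hj => ?_
    rw [h j (hA hj), mem_agreeOff.mp hy j fun hj' => hj'.2 hj]

lemma sum_probEq_agreeOff_self (S : Set I) (x : ∀ i, φ.R i) :
    ∑ y ∈ agreeOff S x, φ.probEq S y = 1 := by
  simpa [probEq_empty] using φ.sum_probEq_agreeOff (Set.empty_subset S) x

lemma sum_probEq_mul_probEq_agreeOff {J1 J2 : Set I} (hd : Disjoint J1 J2) (x : ∀ i, φ.R i) :
    ∑ y ∈ agreeOff (J1 ∪ J2) x, φ.probEq J1 y * φ.probEq J2 y = 1 :=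
  calc _ = ∑ y ∈ agreeOff (J1 ∪ J2) x, (φ.couple J1).probEq (J1 ∪ J2) y :=
        sum_congr rfl fun y _ => (φ.probEq_couple subset_rfl hd.symm y).symm
    _ = 1 := (φ.couple J1).sum_probEq_agreeOff_self _ x

variable {φ} in
lemma Respects.mono {J1 J2 A B : Set I} (h : φ.Respects J1 J2) (hd : Disjoint J1 J2)
    (hA : A ⊆ J1) (hB : B ⊆ J2) : φ.Respects A B := fun x => by
  have hAB : A ∪ B ⊆ J1 ∪ J2 := Set.union_subset_union hA hB
  calc φ.probEq (A ∪ B) x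
      = ∑ y ∈ agreeOff ((J1 ∪ J2) \ (A ∪ B)) x, φ.probEq (J1 ∪ J2) y :=
        (φ.sum_probEq_agreeOff hAB x).symm
    _ = ∑ y ∈ agreeOff ((J1 ∪ J2) \ (A ∪ B)) x, (φ.couple J1).probEq (J1 ∪ J2) y :=
        sum_congr rfl fun y _ => by rw [h y, probEq_couple φ subset_rfl hd.symm]
    _ = (φ.couple J1).probEq (A ∪ B) x := (φ.couple J1).sum_probEq_agreeOff hAB x
    _ = φ.probEq A x * φ.probEq B x := φ.probEq_couple hA (hd.symm.mono_left hB) x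

lemma respects_tensor_iff {J1 J2 : Set I} (hd : Disjoint J1 J2) :
    (φ.tensor ψ).Respects J1 J2 ↔ φ.Respects J1 J2 ∧ ψ.Respects J1 J2 := by
  obtain ⟨ω⟩ := φ.nonempty_Ω
  obtain ⟨ξ⟩ := ψ.nonempty_Ω
  rw [respects_tensor_iff_forall]
  refine ⟨fun h => ⟨fun x => ?_, fun y => ?_⟩, fun ⟨hφ, hψ⟩ x y => by rw [hφ x, hψ y]⟩
  · exact eq_of_forall_mul_eq_mul (fun y _ => h x y)
      (ψ.sum_probEq_agreeOff_self _ fun i => ψ.X i ξ)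
      (ψ.sum_probEq_mul_probEq_agreeOff hd fun i => ψ.X i ξ)
  · exact eq_of_forall_mul_eq_mul (fun x _ => by rw [mul_comm, h x y, mul_comm])
      (φ.sum_probEq_agreeOff_self _ fun i => φ.X i ω)
      (φ.sum_probEq_mul_probEq_agreeOff hd fun i => φ.X i ω)

variable {φ} in
lemma Respects.of_inter {B1 B2 J1 J2 : Set I} (h : φ.Respects B1 B2) (hB : Disjoint B1 B2)
    (hU : B1 ∪ B2 = J1 ∪ J2) (h1 : φ.Respects (B1 ∩ J1) (B1 ∩ J2))
    (h2 : φ.Respects (B2 ∩ J1) (B2 ∩ J2)) : φ.Respects J1 J2 := fun x => by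
  have eB1 : (B1 ∩ J1) ∪ (B1 ∩ J2) = B1 := by
    rw [← Set.inter_union_distrib_left, Set.inter_eq_left.mpr (hU ▸ Set.subset_union_left)]
  have eB2 : (B2 ∩ J1) ∪ (B2 ∩ J2) = B2 := by
    rw [← Set.inter_union_distrib_left, Set.inter_eq_left.mpr (hU ▸ Set.subset_union_right)]
  have eJ1 : (B1 ∩ J1) ∪ (B2 ∩ J1) = J1 := by
    rw [← Set.union_inter_distrib_right, hU, Set.inter_eq_right.mpr Set.subset_union_left]
  have eJ2 : (B1 ∩ J2) ∪ (B2 ∩ J2) = J2 := by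
    rw [← Set.union_inter_distrib_right, hU, Set.inter_eq_right.mpr Set.subset_union_right]
  have q1 := eB1 ▸ h1 x
  have q2 := eB2 ▸ h2 x
  have q3 := eJ1 ▸ h.mono hB Set.inter_subset_left Set.inter_subset_left x
  have q4 := eJ2 ▸ h.mono hB Set.inter_subset_left Set.inter_subset_left x
  rw [← hU, h x, q1, q2, q3, q4]
  ring

lemma subset_or_subset_of_respects {K J1 J2 : Set I} (hK : K ∈ φ.Kconn)
    (hKJ : K ⊆ J1 ∪ J2) (hd : Disjoint J1 J2) (h : φ.Respects J1 J2) : K ⊆ J1 ∨ K ⊆ J2 := by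
  by_contra! hc
  obtain ⟨a, haK, ha1⟩ := Set.not_subset.mp hc.1
  obtain ⟨b, hbK, hb2⟩ := Set.not_subset.mp hc.2
  refine hK (K ∩ J1) (K ∩ J2) ⟨⟨b, hbK, (hKJ hbK).resolve_right hb2⟩,
    ⟨a, haK, (hKJ haK).resolve_left ha1⟩, hd.mono Set.inter_subset_right Set.inter_subset_right,
    by rw [← Set.inter_union_distrib_left, Set.inter_eq_left.mpr hKJ]⟩
    (h.mono hd Set.inter_subset_right Set.inter_subset_right)

lemma isConnectivity_Kconn : IsConnectivity φ.Kconn := by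
  refine ⟨?_, fun i => ?_, fun K L hK hL hKL => ?_⟩
  · rintro J1 J2 ⟨⟨a, ha⟩, -, -, hU⟩ -
    exact (hU.subset (Set.mem_union_left J2 ha) : a ∈ (∅ : Set I))
  · rintro J1 J2 ⟨⟨a, ha⟩, ⟨b, hb⟩, hd, hU⟩ -
    have hai : a = i := hU.subset (Set.mem_union_left J2 ha)
    have hbi : b = i := hU.subset (Set.mem_union_right J1 hb)
    subst hai hbi
    exact Set.disjoint_left.mp hd ha hb
  · rintro J1 J2 ⟨⟨a, ha⟩, ⟨b, hb⟩, hd, hU⟩ h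
    obtain ⟨x, hxK, hxL⟩ := hKL
    have ha' : a ∈ K ∪ L := hU ▸ Set.mem_union_left J2 ha
    have hb' : b ∈ K ∪ L := hU ▸ Set.mem_union_right J1 hb
    rcases φ.subset_or_subset_of_respects hK (hU ▸ Set.subset_union_left) hd h with hK' | hK' <;>
    rcases φ.subset_or_subset_of_respects hL (hU ▸ Set.subset_union_right) hd h with hL' | hL'
    · exact Set.disjoint_left.mp hd (Set.union_subset hK' hL' hb') hb
    · exact Set.disjoint_left.mp hd (hK' hxK) (hL' hxL)
    · exact Set.disjoint_left.mp hd (hL' hxL) (hK' hxK)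
    · exact Set.disjoint_left.mp hd ha (Set.union_subset hK' hL' ha')

/-- Induction on `|J₁ ∪ J₂|`: if `J₁ ∪ J₂ ∉ K_φ`, some respected dissociation `{B₁, B₂}` of it
exists, and by `Respects.of_inter` one of the smaller pairs `(Bₖ ∩ J₁, Bₖ ∩ J₂)` is not
respected. -/
lemma exists_mem_Kconn_contests {J1 J2 : Set I} (hd : Disjoint J1 J2)
    (h : ¬φ.Respects J1 J2) : ∃ A ∈ φ.Kconn, Contests A J1 J2 := by
  obtain ⟨n, hn⟩ : ∃ n, (J1 ∪ J2).ncard = n := ⟨_, rfl⟩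
  induction n using Nat.strong_induction_on generalizing J1 J2 with
  | _ n ih =>
    by_cases hJ : J1 ∪ J2 ∈ φ.Kconn
    · have h1 : J1.Nonempty := Set.nonempty_iff_ne_empty.mpr
        (by rintro rfl; exact h (φ.respects_empty_left J2))
      have h2 : J2.Nonempty := Set.nonempty_iff_ne_empty.mpr
        (by rintro rfl; exact h (φ.respects_empty_left J1).symm)
      exact ⟨_, hJ, subset_rfl, by rwa [Set.union_inter_cancel_left],
        by rwa [Set.union_inter_cancel_right]⟩
    simp only [Kconn, Set.mem_ofPred_eq, not_forall, not_not] at hJ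
    obtain ⟨B1, B2, hB, hBr⟩ := hJ
    have of_ssubset : ∀ B ⊂ J1 ∪ J2, ¬φ.Respects (B ∩ J1) (B ∩ J2) →
        ∃ A ∈ φ.Kconn, Contests A J1 J2 := by
      intro B hB hBr
      have hBU : (B ∩ J1) ∪ (B ∩ J2) = B := by
        rw [← Set.inter_union_distrib_left, Set.inter_eq_left.mpr hB.subset]
      obtain ⟨A, hA, hAc⟩ := ih _ (hn ▸ Set.ncard_lt_ncard hB (Set.toFinite _))
        (hd.mono Set.inter_subset_right Set.inter_subset_right) hBr (by rw [hBU])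
      exact ⟨A, hA, hAc.mono Set.inter_subset_right Set.inter_subset_right⟩
    by_cases h1 : φ.Respects (B1 ∩ J1) (B1 ∩ J2)
    · by_cases h2 : φ.Respects (B2 ∩ J1) (B2 ∩ J2)
      · exact absurd (hBr.of_inter hB.2.2.1 hB.2.2.2 h1 h2) h
      · exact of_ssubset B2 hB.symm.ssubset_left h2
    · exact of_ssubset B1 hB.ssubset_left h1

lemma Kconn_subset_Kconn_tensor_left : φ.Kconn ⊆ (φ.tensor ψ).Kconn :=
  fun _ hJ J1 J2 hdis hr => hJ J1 J2 hdis ((respects_tensor_iff φ ψ hdis.2.2.1).mp hr).1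

lemma Kconn_subset_Kconn_tensor_right : ψ.Kconn ⊆ (φ.tensor ψ).Kconn :=
  fun _ hJ J1 J2 hdis hr => hJ J1 J2 hdis ((respects_tensor_iff φ ψ hdis.2.2.1).mp hr).2

lemma Kconn_tensor_subset_Gamma :
    (φ.tensor ψ).Kconn ⊆ Gamma (φ.Kconn ∪ ψ.Kconn) := by
  intro J hJ J1 J2 hdis
  have hd := hdis.2.2.1
  rcases not_and_or.mp (mt (respects_tensor_iff φ ψ hd).mpr (hJ J1 J2 hdis)) with h | h
  · obtain ⟨A, hA, hc⟩ := φ.exists_mem_Kconn_contests hd h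
    exact ⟨A, Or.inl hA, hc⟩
  · obtain ⟨A, hA, hc⟩ := ψ.exists_mem_Kconn_contests hd h
    exact ⟨A, Or.inr hA, hc⟩

end RandomFamily

theorem stmt14_general {I : Type u} [Fintype I] (φ ψ : RandomFamily I) :
    (φ.tensor ψ).Kconn = csum φ.Kconn ψ.Kconn ∧
    (φ.tensor ψ).Kconn = generated (φ.Kconn ∪ ψ.Kconn) := by
  have key : (φ.tensor ψ).Kconn = generated (φ.Kconn ∪ ψ.Kconn) :=
    ((φ.Kconn_tensor_subset_Gamma ψ).trans (Gamma_subset_generated _)).antisymm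
      (generated_subset (φ.tensor ψ).isConnectivity_Kconn (Set.union_subset
        (φ.Kconn_subset_Kconn_tensor_left ψ) (φ.Kconn_subset_Kconn_tensor_right ψ)))
  exact ⟨key, key⟩

/-- `K_{φ⊗ψ} = K_φ ⊕ K_ψ = [K_φ ∪ K_ψ]`. -/
theorem stmt14 {I : Type u} [Fintype I] [Nonempty I] (φ ψ : RandomFamily I) :
    (φ.tensor ψ).Kconn = csum φ.Kconn ψ.Kconn ∧
    (φ.tensor ψ).Kconn = generated (φ.Kconn ∪ ψ.Kconn) :=
  stmt14_general φ ψ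
end
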